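/- Let k be a field of characteristic zero, R = k[ℏ] the polynomial ring in one variable ℏ, and H a bialgebra over R, with Drinfeld maps δ_n : H → H^{⊗n} (tensor products over R). Define H′ := { η ∈ H : δ_n(η) ∈ ℏ^n·H^{⊗n} for all n ≥ 1 }. Then H′ is an R-subalgebra of H: it contains 1, is closed under addition and scalar multiplication by R, and is closed under multiplication. -/

import Mathlib

open scoped TensorProduct
noncomputable section

universe u
variable (R : Type u) [CommRing R] (H : Type u) [Ring H] [Bialgebra R H]

/-- The `n`-fold tensor power `H^{⊗n}` over `R` (with `H^{⊗0} = R`). -/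
def TpowB : ℕ → ModuleCat R
  | 0 => ModuleCat.of R R
  | n+1 => ModuleCat.of R (H ⊗[R] (TpowB n))

/-- The iterated coproducts `Δ^n : H → H^{⊗n}`, with `Δ^0 := ε`. -/
def DeltaB : (n : ℕ) → (H →ₗ[R] TpowB R H n)
  | 0 => Bialgebra.counitAlgHom R H |>.toLinearMap
  | n+1 => (TensorProduct.map LinearMap.id (DeltaB n)) ∘ₗ Coalgebra.comul

/-- `id - u ∘ ε : H → H`. -/
def projB : H →ₗ[R] H := LinearMap.id - (Algebra.linearMap R H) ∘ₗ Coalgebra.counit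

/-- `(id - u∘ε)^{⊗n} : H^{⊗n} → H^{⊗n}`. -/
def projPowB : (n : ℕ) → (TpowB R H n →ₗ[R] TpowB R H n)
  | 0 => LinearMap.id
  | n+1 => TensorProduct.map (projB R H) (projPowB n)

/-- Drinfeld's maps `δ_n := (id - u∘ε)^{⊗n} ∘ Δ^n : H → H^{⊗n}` (`δ_0 = ε`). -/
def deltaB (n : ℕ) : H →ₗ[R] TpowB R H n := projPowB R H n ∘ₗ DeltaB R H n

lemma delta_succ (n : ℕ) :
    deltaB R H (n+1) = (TensorProduct.map (projB R H) (deltaB R H n)) ∘ₗ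
      (Coalgebra.comul : H →ₗ[R] H ⊗[R] H) := by
  show projPowB R H (n+1) ∘ₗ DeltaB R H (n+1) = _
  refine LinearMap.ext fun x => ?_
  have h := LinearMap.congr_fun (TensorProduct.map_comp (projB R H) (projPowB R H n)
    (LinearMap.id : H →ₗ[R] H) (DeltaB R H n)) (Coalgebra.comul x)
  rw [LinearMap.comp_id] at h
  exact h.symm

-- test: mulT
noncomputable def mulT : (n : ℕ) → (TpowB R H n →ₗ[R] TpowB R H n →ₗ[R] TpowB R H n)
  | 0 => LinearMap.mul R R
  | n+1 => TensorProduct.lift <| LinearMap.mk₂ R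
      (fun a s => TensorProduct.map (LinearMap.mul R H a) (mulT n s))
      (fun a a' s => by simp only [map_add, TensorProduct.map_add_left]; rfl)
      (fun c a s => by simp only [map_smul, TensorProduct.map_smul_left]; rfl)
      (fun a s s' => by simp only [map_add, TensorProduct.map_add_right]; rfl)
      (fun c a s => by simp only [map_smul, TensorProduct.map_smul_right]; rfl)

lemma mulT_tmul (n : ℕ) (a b : H) (s t : TpowB R H n) :
    mulT R H (n+1) (a ⊗ₜ s) (b ⊗ₜ t) = (a*b) ⊗ₜ (mulT R H n s t) := by
  rfl

inductive Lab | B | X | Y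
open Lab

def llen : List Lab → ℕ
  | [] => 0
  | _::l => llen l + 1

def nxc : List Lab → ℕ
  | [] => 0
  | B::l => nxc l + 1
  | X::l => nxc l + 1
  | Y::l => nxc l

def nyc : List Lab → ℕ
  | [] => 0
  | B::l => nyc l + 1
  | Y::l => nyc l + 1
  | X::l => nyc l

lemma llen_le (l : List Lab) : llen l ≤ nxc l + nyc l := by
  induction l with
  | nil => simp [llen, nxc, nyc]
  | cons h l ih => cases h <;> simp [llen, nxc, nyc] <;> omega

noncomputable def iox : (l : List Lab) → (TpowB R H (nxc l) →ₗ[R] TpowB R H (llen l))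
  | [] => LinearMap.id
  | B::l => TensorProduct.map LinearMap.id (iox l)
  | X::l => TensorProduct.map LinearMap.id (iox l)
  | Y::l => (TensorProduct.mk R H (TpowB R H (llen l)) 1) ∘ₗ iox l

noncomputable def ioy : (l : List Lab) → (TpowB R H (nyc l) →ₗ[R] TpowB R H (llen l))
  | [] => LinearMap.id
  | B::l => TensorProduct.map LinearMap.id (ioy l)
  | Y::l => TensorProduct.map LinearMap.id (ioy l)
  | X::l => (TensorProduct.mk R H (TpowB R H (llen l)) 1) ∘ₗ ioy l

/-- `a ⊗ b ↦ ε(b) • a` -/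
noncomputable def c1 : H ⊗[R] H →ₗ[R] H :=
  (TensorProduct.rid R H).toLinearMap ∘ₗ TensorProduct.map LinearMap.id Coalgebra.counit

/-- `a ⊗ b ↦ ε(a) • b` -/
noncomputable def c2 : H ⊗[R] H →ₗ[R] H :=
  (TensorProduct.lid R H).toLinearMap ∘ₗ TensorProduct.map Coalgebra.counit LinearMap.id

/-- `a ⊗ b ↦ π(a) * π(b)` -/
noncomputable def pm : H ⊗[R] H →ₗ[R] H :=
  LinearMap.mul' R H ∘ₗ TensorProduct.map (projB R H) (projB R H)

noncomputable def theta : H ⊗[R] (H ⊗[R] H) →ₗ[R] H ⊗[R] (H ⊗[R] H) :=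
  (TensorProduct.assoc R H H H).toLinearMap ∘ₗ
    (TensorProduct.map (TensorProduct.comm R H H).toLinearMap LinearMap.id) ∘ₗ
    (TensorProduct.assoc R H H H).symm.toLinearMap

@[simp] lemma theta_tmul (x y z : H) : theta R H (x ⊗ₜ (y ⊗ₜ z)) = y ⊗ₜ (x ⊗ₜ z) := by
  simp [theta]

@[simp] lemma c1_tmul (a b : H) : c1 R H (a ⊗ₜ b) = Coalgebra.counit (R := R) b • a := by
  simp [c1]

@[simp] lemma c2_tmul (a b : H) : c2 R H (a ⊗ₜ b) = Coalgebra.counit (R := R) a • b := by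
  simp [c2]

@[simp] lemma pm_tmul (a b : H) : pm R H (a ⊗ₜ b) = projB R H a * projB R H b := by
  simp [pm]

lemma c2_comul (x : H) : c2 R H (Coalgebra.comul x) = x := by
  have h := Coalgebra.rTensor_counit_comul (R := R) x
  have : c2 R H (Coalgebra.comul x)
      = (TensorProduct.lid R H) ((LinearMap.rTensor H Coalgebra.counit) (Coalgebra.comul x)) := rfl
  rw [this, h]
  simp

lemma c1_comul (x : H) : c1 R H (Coalgebra.comul x) = x := by
  have h := Coalgebra.lTensor_counit_comul (R := R) x
  have : c1 R H (Coalgebra.comul x)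
      = (TensorProduct.rid R H) ((LinearMap.lTensor H Coalgebra.counit) (Coalgebra.comul x)) := rfl
  rw [this, h]
  simp

noncomputable def headB {m : ℕ} (F : H ⊗[R] H →ₗ[R] TpowB R H m) :
    H ⊗[R] H →ₗ[R] TpowB R H (m+1) :=
  TensorProduct.map (pm R H) F ∘ₗ
    (TensorProduct.tensorTensorTensorComm R H H H H).toLinearMap ∘ₗ
    TensorProduct.map Coalgebra.comul Coalgebra.comul

noncomputable def headX {m : ℕ} (F : H ⊗[R] H →ₗ[R] TpowB R H m) :
    H ⊗[R] H →ₗ[R] TpowB R H (m+1) :=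
  TensorProduct.map (projB R H) F ∘ₗ (TensorProduct.assoc R H H H).toLinearMap ∘ₗ
    TensorProduct.map Coalgebra.comul LinearMap.id

noncomputable def headY {m : ℕ} (F : H ⊗[R] H →ₗ[R] TpowB R H m) :
    H ⊗[R] H →ₗ[R] TpowB R H (m+1) :=
  TensorProduct.map (projB R H) F ∘ₗ theta R H ∘ₗ TensorProduct.map LinearMap.id Coalgebra.comul

noncomputable def headL (h : Lab) {m : ℕ} (F : H ⊗[R] H →ₗ[R] TpowB R H m) :
    H ⊗[R] H →ₗ[R] TpowB R H (m+1) :=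
  match h with
  | B => headB R H F
  | X => headX R H F
  | Y => headY R H F

noncomputable def MM : (l : List Lab) → (H ⊗[R] H →ₗ[R] TpowB R H (llen l))
  | [] => (TensorProduct.lid R R).toLinearMap ∘ₗ
      TensorProduct.map Coalgebra.counit Coalgebra.counit
  | h::l => headL R H h (MM l)

noncomputable def mulMap (l : List Lab) : H ⊗[R] H →ₗ[R] TpowB R H (llen l) :=
  TensorProduct.lift (mulT R H (llen l)) ∘ₗ
    TensorProduct.map (iox R H l ∘ₗ deltaB R H (nxc l)) (ioy R H l ∘ₗ deltaB R H (nyc l))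

lemma mulMap_tmul (l : List Lab) (x y : H) :
    mulMap R H l (x ⊗ₜ y)
      = mulT R H (llen l) (iox R H l (deltaB R H (nxc l) x)) (ioy R H l (deltaB R H (nyc l) y)) := by
  simp [mulMap]


lemma delta_succ_apply (n : ℕ) (x : H) :
    deltaB R H (n+1) x
      = TensorProduct.map (projB R H) (deltaB R H n) (Coalgebra.comul x) :=
  LinearMap.congr_fun (delta_succ R H n) x

set_option maxHeartbeats 1000000 in
set_option synthInstance.maxHeartbeats 200000 in
lemma fact : ∀ l : List Lab, MM R H l = mulMap R H l := by
  intro l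
  induction l with
  | nil =>
    apply TensorProduct.ext'
    intro x y
    rfl
  | cons h l ih =>
    apply TensorProduct.ext'
    intro x y
    cases h with
    | X =>
      show headX R H (MM R H l) (x ⊗ₜ y) = mulMap R H (Lab.X :: l) (x ⊗ₜ y)
      rw [mulMap_tmul]
      show TensorProduct.map (projB R H) (MM R H l)
          (TensorProduct.assoc R H H H (Coalgebra.comul x ⊗ₜ y))
        = mulT R H (llen l + 1) (TensorProduct.map LinearMap.id (iox R H l) (deltaB R H (nxc l + 1) x))
            (TensorProduct.mk R H _ 1 (ioy R H l (deltaB R H (nyc l) y)))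
      rw [ih, delta_succ_apply]
      generalize (Coalgebra.comul (R := R) x : H ⊗[R] H) = u
      induction u using TensorProduct.induction_on with
      | zero =>
        rw [TensorProduct.zero_tmul, LinearEquiv.map_zero]
        exact rfl
      | tmul a b =>
        show (projB R H a) ⊗ₜ[R]
            (mulT R H (llen l) ((iox R H l) ((deltaB R H (nxc l)) b))
              ((ioy R H l) ((deltaB R H (nyc l)) y)))
          = ((projB R H a) * 1) ⊗ₜ[R]
            (mulT R H (llen l) ((iox R H l) ((deltaB R H (nxc l)) b))
              ((ioy R H l) ((deltaB R H (nyc l)) y)))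
        rw [mul_one]
      | add u v hu hv =>
        simp only [TensorProduct.add_tmul, map_add, LinearMap.add_apply, hu, hv]
        exact (LinearMap.congr_fun (map_add (mulT R H (llen l + 1)) _ _) _).symm
    | Y =>
      show headY R H (MM R H l) (x ⊗ₜ y) = mulMap R H (Lab.Y :: l) (x ⊗ₜ y)
      rw [mulMap_tmul]
      show TensorProduct.map (projB R H) (MM R H l) (theta R H (x ⊗ₜ Coalgebra.comul y))
        = mulT R H (llen l + 1) (TensorProduct.mk R H _ 1 (iox R H l (deltaB R H (nxc l) x)))
            (TensorProduct.map LinearMap.id (ioy R H l) (deltaB R H (nyc l + 1) y))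
      rw [ih, delta_succ_apply]
      generalize (Coalgebra.comul (R := R) y : H ⊗[R] H) = v
      induction v using TensorProduct.induction_on with
      | zero =>
        rw [TensorProduct.tmul_zero]
        exact rfl
      | tmul c d =>
        show (projB R H c) ⊗ₜ[R]
            (mulT R H (llen l) ((iox R H l) ((deltaB R H (nxc l)) x))
              ((ioy R H l) ((deltaB R H (nyc l)) d)))
          = (1 * (projB R H c)) ⊗ₜ[R]
            (mulT R H (llen l) ((iox R H l) ((deltaB R H (nxc l)) x))
              ((ioy R H l) ((deltaB R H (nyc l)) d)))
        rw [one_mul]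
      | add u v hu hv =>
        simp only [TensorProduct.tmul_add, map_add, LinearMap.add_apply, hu, hv]
        exact (map_add _ _ _).symm
    | B =>
      show headB R H (MM R H l) (x ⊗ₜ y) = mulMap R H (Lab.B :: l) (x ⊗ₜ y)
      rw [mulMap_tmul]
      show TensorProduct.map (pm R H) (MM R H l)
          (TensorProduct.tensorTensorTensorComm R H H H H (Coalgebra.comul x ⊗ₜ Coalgebra.comul y))
        = mulT R H (llen l + 1) (TensorProduct.map LinearMap.id (iox R H l) (deltaB R H (nxc l + 1) x))
            (TensorProduct.map LinearMap.id (ioy R H l) (deltaB R H (nyc l + 1) y))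
      rw [ih, delta_succ_apply R H (nxc l), delta_succ_apply R H (nyc l)]
      generalize (Coalgebra.comul (R := R) x : H ⊗[R] H) = u
      generalize (Coalgebra.comul (R := R) y : H ⊗[R] H) = v
      induction u using TensorProduct.induction_on with
      | zero =>
        rw [TensorProduct.zero_tmul]
        exact rfl
      | tmul a b =>
        induction v using TensorProduct.induction_on with
        | zero =>
          rw [TensorProduct.tmul_zero]
          exact rfl
        | tmul c d => rfl
        | add u v hu hv =>
          simp only [TensorProduct.tmul_add, map_add, LinearMap.add_apply, hu, hv]
          exact (map_add _ _ _).symm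
      | add u v hu hv =>
        simp only [TensorProduct.add_tmul, map_add, LinearMap.add_apply, hu, hv]
        exact (LinearMap.congr_fun (map_add (mulT R H (llen l + 1)) _ _) _).symm

lemma proj_mul (a c : H) :
    projB R H (a * c) = projB R H a * projB R H c
      + Coalgebra.counit (R := R) a • projB R H c
      + Coalgebra.counit (R := R) c • projB R H a := by
  simp only [projB, LinearMap.sub_apply, LinearMap.id_apply, LinearMap.comp_apply,
    Algebra.linearMap_apply, Algebra.smul_def]
  rw [← add_mul, sub_add_cancel, mul_sub, mul_sub,
    ← Algebra.commutes (Coalgebra.counit (R := R) c) a, sub_add_sub_cancel,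
    ← map_mul (algebraMap R H), Bialgebra.counit_mul,
    mul_comm (Coalgebra.counit (R := R) c) (Coalgebra.counit (R := R) a)]

/-- `δ_n ∘ μ : H ⊗ H → H^{⊗n}`. -/
noncomputable def NN (n : ℕ) : H ⊗[R] H →ₗ[R] TpowB R H n :=
  deltaB R H n ∘ₗ LinearMap.mul' R H

set_option maxHeartbeats 1600000 in
lemma key (n : ℕ) (u v : H ⊗[R] H) :
    TensorProduct.map (projB R H) (deltaB R H n) (u * v)
      = TensorProduct.map (pm R H) (NN R H n)
          ((TensorProduct.tensorTensorTensorComm R H H H H) (u ⊗ₜ v))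
        + TensorProduct.map (projB R H) (NN R H n) (theta R H (c2 R H u ⊗ₜ v))
        + TensorProduct.map (projB R H) (NN R H n)
            ((TensorProduct.assoc R H H H) (u ⊗ₜ c2 R H v)) := by
  induction u using TensorProduct.induction_on with
  | zero =>
    rw [zero_mul, TensorProduct.zero_tmul, TensorProduct.zero_tmul,
      show c2 R H (0 : H ⊗[R] H) = 0 from map_zero _, TensorProduct.zero_tmul]
    exact rfl
  | tmul a b =>
    induction v using TensorProduct.induction_on with
    | zero =>
      rw [mul_zero, TensorProduct.tmul_zero, TensorProduct.tmul_zero,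
        show c2 R H (0 : H ⊗[R] H) = 0 from map_zero _, TensorProduct.tmul_zero]
      exact rfl
    | tmul c d =>
      rw [Algebra.TensorProduct.tmul_mul_tmul]
      show projB R H (a*c) ⊗ₜ[R] (deltaB R H n) (b*d)
          = pm R H (a ⊗ₜ c) ⊗ₜ[R] NN R H n (b ⊗ₜ d)
            + projB R H c ⊗ₜ[R] NN R H n ((Coalgebra.counit (R := R) a • b) ⊗ₜ d)
            + projB R H a ⊗ₜ[R] NN R H n (b ⊗ₜ (Coalgebra.counit (R := R) c • d))
      rw [proj_mul R H a c, TensorProduct.add_tmul, TensorProduct.add_tmul]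
      congr 1
      · congr 1
        rw [show ((Coalgebra.counit (R := R) a • b) ⊗ₜ[R] d) =
            Coalgebra.counit (R := R) a • (b ⊗ₜ[R] d) from (TensorProduct.smul_tmul' _ _ _).symm,
          LinearMap.map_smul, TensorProduct.tmul_smul, TensorProduct.smul_tmul']
        rfl
      · rw [show (b ⊗ₜ[R] (Coalgebra.counit (R := R) c • d)) =
            Coalgebra.counit (R := R) c • (b ⊗ₜ[R] d) from TensorProduct.tmul_smul _ _ _,
          LinearMap.map_smul, TensorProduct.tmul_smul, TensorProduct.smul_tmul']
        rfl
    | add v w hv hw =>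
      rw [mul_add, TensorProduct.tmul_add,
        show c2 R H (v + w) = c2 R H v + c2 R H w from map_add _ _ _,
        TensorProduct.tmul_add, TensorProduct.tmul_add]
      simp only [LinearEquiv.map_add, LinearMap.map_add]
      rw [hv, hw]
      abel
  | add u w hu hw =>
    rw [add_mul, TensorProduct.add_tmul,
      show c2 R H (u + w) = c2 R H u + c2 R H w from map_add _ _ _,
      TensorProduct.add_tmul, TensorProduct.add_tmul]
    simp only [LinearEquiv.map_add, LinearMap.map_add]
    rw [hu, hw]
    abel

lemma NR (n : ℕ) : NN R H (n+1)
    = headB R H (NN R H n) + headY R H (NN R H n) + headX R H (NN R H n) := by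
  apply TensorProduct.ext'
  intro x y
  show deltaB R H (n+1) (x * y) = _
  rw [delta_succ_apply, Bialgebra.comul_mul, key, c2_comul, c2_comul]
  rfl

lemma N0 : NN R H 0 = MM R H [] := by
  apply TensorProduct.ext'
  intro x y
  show Coalgebra.counit (x * y) = Coalgebra.counit (R := R) x • Coalgebra.counit (R := R) y
  rw [Bialgebra.counit_mul, smul_eq_mul]

/-- Divisibility by `h ^ n` in a module. -/
def DivH (h : R) (n : ℕ) {M : Type u} [AddCommGroup M] [Module R M] (ξ : M) : Prop :=
  ∃ ζ : M, ξ = h^n • ζ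

lemma DivH_zero_pow {M : Type u} [AddCommGroup M] [Module R M] (h : R) (ξ : M) :
    DivH R h 0 ξ := ⟨ξ, by rw [pow_zero, one_smul]⟩

lemma DivH_add {M : Type u} [AddCommGroup M] [Module R M] {h : R} {n : ℕ} {ξ ζ : M}
    (hξ : DivH R h n ξ) (hζ : DivH R h n ζ) : DivH R h n (ξ + ζ) := by
  obtain ⟨a, rfl⟩ := hξ; obtain ⟨b, rfl⟩ := hζ
  exact ⟨a + b, by rw [smul_add]⟩

lemma DivH_map {M N : Type u} [AddCommGroup M] [Module R M] [AddCommGroup N] [Module R N]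
    (f : M →ₗ[R] N) {h : R} {n : ℕ} {ξ : M} (hξ : DivH R h n ξ) : DivH R h n (f ξ) := by
  obtain ⟨a, rfl⟩ := hξ
  exact ⟨f a, by rw [map_smul]⟩

lemma DivH_mono {M : Type u} [AddCommGroup M] [Module R M] {h : R} {p q : ℕ} {ξ : M}
    (hpq : p ≤ q) (hξ : DivH R h q ξ) : DivH R h p ξ := by
  obtain ⟨a, rfl⟩ := hξ
  exact ⟨h^(q-p) • a, by rw [smul_smul, ← pow_add, Nat.add_sub_cancel' hpq]⟩

lemma DivH_mulT {m : ℕ} {h : R} {p q : ℕ} {ξ ζ : TpowB R H m}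
    (hξ : DivH R h p ξ) (hζ : DivH R h q ζ) : DivH R h (p+q) (mulT R H m ξ ζ) := by
  obtain ⟨a, rfl⟩ := hξ; obtain ⟨b, rfl⟩ := hζ
  exact ⟨mulT R H m a b, by
    rw [map_smul, map_smul, LinearMap.smul_apply, smul_smul, ← pow_add, Nat.add_comm q p]⟩

lemma div_MM {h : R} {x y : H} (hx : ∀ n, DivH R h n (deltaB R H n x))
    (hy : ∀ n, DivH R h n (deltaB R H n y)) (l : List Lab) :
    DivH R h (llen l) (MM R H l (x ⊗ₜ y)) := by
  rw [fact, mulMap_tmul]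
  exact DivH_mono R (llen_le l)
    (DivH_mulT R H (DivH_map R (iox R H l) (hx (nxc l))) (DivH_map R (ioy R H l) (hy (nyc l))))

def qidx : List Lab → ℕ → ℕ
  | [], m => m
  | _::l, m => qidx l (m+1)

noncomputable def QQ : (l : List Lab) → {m : ℕ} → (H ⊗[R] H →ₗ[R] TpowB R H m) →
    (H ⊗[R] H →ₗ[R] TpowB R H (qidx l m))
  | [], _, F => F
  | h::l, _, F => QQ l (headL R H h F)

lemma headL_add (h : Lab) {m : ℕ} (F G : H ⊗[R] H →ₗ[R] TpowB R H m) :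
    headL R H h (F + G) = headL R H h F + headL R H h G := by
  cases h <;>
    simp only [headL, headB, headX, headY, TensorProduct.map_add_right, LinearMap.add_comp] <;> rfl

lemma QQ_add : ∀ (l : List Lab) {m : ℕ} (F G : H ⊗[R] H →ₗ[R] TpowB R H m),
    QQ R H l (F + G) = QQ R H l F + QQ R H l G
  | [], _, F, G => rfl
  | h::l, _, F, G => by
    show QQ R H l (headL R H h (F + G)) = _
    rw [headL_add, QQ_add l]
    rfl

lemma div_QQM {h : R} {x y : H} (hx : ∀ n, DivH R h n (deltaB R H n x))
    (hy : ∀ n, DivH R h n (deltaB R H n y)) :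
    ∀ (l es : List Lab), DivH R h (qidx l (llen es)) (QQ R H l (MM R H es) (x ⊗ₜ y))
  | [], es => div_MM R H hx hy es
  | hd::l, es => div_QQM hx hy l (hd::es)

lemma claim5 {h : R} {x y : H} (hx : ∀ n, DivH R h n (deltaB R H n x))
    (hy : ∀ n, DivH R h n (deltaB R H n y)) :
    ∀ (n : ℕ) (l : List Lab), DivH R h (qidx l n) (QQ R H l (NN R H n) (x ⊗ₜ[R] y)) := by
  intro n
  induction n with
  | zero =>
    intro l
    rw [N0]
    exact div_QQM R H hx hy l []
  | succ n ih =>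
    intro l
    rw [NR, QQ_add, QQ_add]
    exact DivH_add R (DivH_add R (ih (Lab.B::l)) (ih (Lab.Y::l))) (ih (Lab.X::l))

lemma div_delta_mul {h : R} {x y : H} (hx : ∀ n, DivH R h n (deltaB R H n x))
    (hy : ∀ n, DivH R h n (deltaB R H n y)) (n : ℕ) :
    DivH R h n (deltaB R H n (x * y)) :=
  claim5 R H hx hy n []

lemma proj_one : projB R H 1 = 0 := by
  simp [projB, Bialgebra.counit_one]

lemma delta_one (n : ℕ) : deltaB R H (n+1) (1 : H) = 0 := by
  rw [delta_succ_apply, Bialgebra.comul_one, Algebra.TensorProduct.one_def,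
    show TensorProduct.map (projB R H) (deltaB R H n) ((1:H) ⊗ₜ[R] (1:H))
      = projB R H 1 ⊗ₜ[R] deltaB R H n 1 from rfl,
    proj_one, TensorProduct.zero_tmul]
  rfl

variable (k : Type u) [Field k] [CharZero k]
variable (H' : Type u) [Ring H'] [Bialgebra (Polynomial k) H']

/-- Membership in `H′ := { η ∈ H : δ_n(η) ∈ ℏ^n·H^{⊗n} for all n ≥ 1 }`,
where `ℏ` is the polynomial variable `X` of `R = k[ℏ]`. -/
def memHprime (η : H') : Prop :=
  ∀ n : ℕ, 1 ≤ n → ∃ ξ : TpowB (Polynomial k) H' n,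
    deltaB (Polynomial k) H' n η = (Polynomial.X : Polynomial k) ^ n • ξ

/-- Over `R = k[ℏ]` (`k` a field of characteristic zero), the set
`H′ = { η : δ_n(η) ∈ ℏ^n H^{⊗n} ∀ n ≥ 1 }` is an `R`-subalgebra of the bialgebra `H`:
it contains `1`, and is closed under addition, `R`-scalar multiplication, and
multiplication. -/
theorem stmt18 :
    memHprime k H' 1 ∧
    (∀ a b : H', memHprime k H' a → memHprime k H' b → memHprime k H' (a + b)) ∧
    (∀ (r : Polynomial k) (a : H'), memHprime k H' a → memHprime k H' (r • a)) ∧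
    (∀ a b : H', memHprime k H' a → memHprime k H' b → memHprime k H' (a * b)) := by
  refine ⟨?_, ?_, ?_, ?_⟩
  · intro n hn
    obtain ⟨m, rfl⟩ : ∃ m, n = m + 1 := ⟨n - 1, by omega⟩
    exact ⟨0, by rw [delta_one, smul_zero]⟩
  · intro a b ha hb n hn
    obtain ⟨ξ, hξ⟩ := ha n hn
    obtain ⟨ζ, hζ⟩ := hb n hn
    exact ⟨ξ + ζ, by rw [map_add, hξ, hζ, smul_add]⟩
  · intro r a ha n hn
    obtain ⟨ξ, hξ⟩ := ha n hn
    exact ⟨r • ξ, by rw [map_smul, hξ, smul_comm]⟩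
  · intro a b ha hb n hn
    have hx : ∀ m, DivH (Polynomial k) Polynomial.X m (deltaB (Polynomial k) H' m a) := by
      intro m
      cases m with
      | zero => exact DivH_zero_pow _ _ _
      | succ m => exact ha (m+1) (by omega)
    have hy : ∀ m, DivH (Polynomial k) Polynomial.X m (deltaB (Polynomial k) H' m b) := by
      intro m
      cases m with
      | zero => exact DivH_zero_pow _ _ _
      | succ m => exact hb (m+1) (by omega)
    exact div_delta_mul (Polynomial k) H' hx hy n
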